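/- Let d ≥ 2, let J and L be finite sets ('joints' and 'lines'), with an incidence relation where each p ∈ J lies on exactly d lines, and suppose there exist nonnegative reals b_{p,ℓ} (defined for incident pairs) such that ∑_{p ∈ ℓ} b_{p,ℓ} = 1 for every ℓ ∈ L, the product ∏_{ℓ ∋ p} b_{p,ℓ} equals a common value W for all p ∈ J, and ∑_{p∈J} ∏_{ℓ∋p} b_{p,ℓ} ≥ 1/d!. Then |J| ≤ ((d-1)!^{1/(d-1)}/d) · |L|^{d/(d-1)}. -/

import Mathlib

open Finset Real

/-!
Double counting the incidences and using `∑_{p ∈ ℓ} b_{p,ℓ} = 1` gives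
`∑_p ∑_{ℓ ∋ p} b_{p,ℓ} = |L|`, while AM–GM at each joint bounds the inner sum below by
`d W^{1/d}`. Hence `d |J| W^{1/d} ≤ |L|`; raising to the `d`-th power and inserting
`|J| W ≥ 1/d!` leaves `(d |J|)^{d-1} ≤ (d-1)! |L|^d`, and a `(d-1)`-th root finishes.
-/

lemma Real.card_mul_prod_rpow_inv_card_le_sum {ι : Type*} (s : Finset ι) {f : ι → ℝ}
    (hf : ∀ i ∈ s, 0 ≤ f i) :
    (#s : ℝ) * (∏ i ∈ s, f i) ^ (#s : ℝ)⁻¹ ≤ ∑ i ∈ s, f i := by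
  rcases s.eq_empty_or_nonempty with rfl | hs
  · simp
  have hcard : (0 : ℝ) < #s := by exact_mod_cast hs.card_pos
  have amgm := geom_mean_le_arith_mean s (fun _ ↦ 1) f (fun _ _ ↦ zero_le_one)
    (by simpa using hcard) hf
  simp only [rpow_one, one_mul, sum_const, nsmul_eq_mul, mul_one] at amgm
  rwa [le_div_iff₀ hcard, mul_comm] at amgm

lemma Finset.sum_sum_filter_eq_card {α β R : Type*} [AddCommMonoidWithOne R]
    (J : Finset α) (L : Finset β) (Inc : α → β → Prop) [∀ p ℓ, Decidable (Inc p ℓ)]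
    (b : α → β → R) (hline : ∀ ℓ ∈ L, ∑ p ∈ J.filter (Inc · ℓ), b p ℓ = 1) :
    ∑ p ∈ J, ∑ ℓ ∈ L.filter (Inc p ·), b p ℓ = #L := by
  rw [sum_comm' (t' := L) (s' := fun ℓ ↦ J.filter (Inc · ℓ)) fun p ℓ ↦ by
    simp only [mem_filter]; tauto, sum_congr rfl hline, sum_const, nsmul_one]

lemma Real.le_rpow_inv_of_pow_le {x y : ℝ} {k : ℕ} (hk : k ≠ 0) (hx : 0 ≤ x)
    (h : x ^ k ≤ y) : x ≤ y ^ (k : ℝ)⁻¹ :=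
  calc x = (x ^ k) ^ (k : ℝ)⁻¹ := (pow_rpow_inv_natCast hx hk).symm
    _ ≤ y ^ (k : ℝ)⁻¹ := rpow_le_rpow (by positivity) h (by positivity)

lemma pow_pred_le_factorial_mul_pow {n : ℕ} (hn : n ≠ 0) {N W M : ℝ} (hW : 0 ≤ W)
    (hlow : 1 / n.factorial ≤ N * W) (hM : n * N * W ^ (n : ℝ)⁻¹ ≤ M) :
    (n * N) ^ (n - 1) ≤ (n - 1).factorial * M ^ n := by
  have hN : 0 ≤ N :=
    (pos_of_mul_pos_left ((by positivity : (0 : ℝ) < 1 / n.factorial).trans_le hlow) hW).le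
  have hpow : (n * N) ^ n * W ≤ M ^ n :=
    calc (n * N) ^ n * W = (n * N * W ^ (n : ℝ)⁻¹) ^ n := by
          rw [mul_pow _ (W ^ _), rpow_inv_natCast_pow hW hn]
      _ ≤ M ^ n := pow_le_pow_left₀ (by positivity) hM n
  calc (n * N) ^ (n - 1)
      = (n - 1).factorial * ((n * N) ^ (n - 1) * n * (1 / n.factorial)) := by
        rw [← Nat.mul_factorial_pred hn]; push_cast; field_simp
    _ ≤ (n - 1).factorial * ((n * N) ^ (n - 1) * n * (N * W)) := by gcongr
    _ = (n - 1).factorial * ((n * N) ^ n * W) := by rw [← pow_sub_one_mul hn]; ring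
    _ ≤ (n - 1).factorial * M ^ n := by gcongr

/-- Abstract final argument of the joints theorem: given weights `b` on incident
(joint, line) pairs with per-line sums equal to 1, a common product value `W` at
each joint, and total product sum at least `1/d!`, the number of joints is at
most `((d-1)!^(1/(d-1)) / d) * |L|^(d/(d-1))`. -/
theorem joints_variational_bound {α β : Type*} (d : ℕ) (hd : 2 ≤ d)
    (J : Finset α) (L : Finset β) (Inc : α → β → Prop) [∀ p ℓ, Decidable (Inc p ℓ)]
    (hreg : ∀ p ∈ J, (L.filter fun ℓ => Inc p ℓ).card = d)
    (b : α → β → ℝ) (W : ℝ)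
    (hb : ∀ p ∈ J, ∀ ℓ ∈ L, Inc p ℓ → 0 ≤ b p ℓ)
    (hline : ∀ ℓ ∈ L, ∑ p ∈ J.filter (fun p => Inc p ℓ), b p ℓ = 1)
    (hW : ∀ p ∈ J, ∏ ℓ ∈ L.filter (fun ℓ => Inc p ℓ), b p ℓ = W)
    (hlow : (1 : ℝ) / d.factorial ≤
      ∑ p ∈ J, ∏ ℓ ∈ L.filter (fun ℓ => Inc p ℓ), b p ℓ) :
    (J.card : ℝ) ≤ (((d - 1).factorial : ℝ) ^ (1 / ((d : ℝ) - 1)) / (d : ℝ)) *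
      (L.card : ℝ) ^ ((d : ℝ) / ((d : ℝ) - 1)) := by
  rcases J.eq_empty_or_nonempty with rfl | ⟨p₀, hp₀⟩
  · simp only [card_empty, Nat.cast_zero]
    positivity
  have hbp : ∀ p ∈ J, ∀ ℓ ∈ L.filter (Inc p ·), 0 ≤ b p ℓ := fun p hp ℓ hℓ ↦
    hb p hp ℓ (mem_filter.1 hℓ).1 (mem_filter.1 hℓ).2
  have hW₀ : 0 ≤ W := hW p₀ hp₀ ▸ prod_nonneg (hbp p₀ hp₀)
  have hNW : 1 / d.factorial ≤ #J * W := by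
    rwa [sum_congr rfl hW, sum_const, nsmul_eq_mul] at hlow
  have hAMGM : ∀ p ∈ J, d * W ^ (d : ℝ)⁻¹ ≤ ∑ ℓ ∈ L.filter (Inc p ·), b p ℓ :=
    fun p hp ↦ by
      simpa only [hreg p hp, hW p hp] using card_mul_prod_rpow_inv_card_le_sum _ (hbp p hp)
  have hdN : d * #J * W ^ (d : ℝ)⁻¹ ≤ #L :=
    calc d * #J * W ^ (d : ℝ)⁻¹ = ∑ p ∈ J, d * W ^ (d : ℝ)⁻¹ := by
          rw [sum_const, nsmul_eq_mul]; ring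
      _ ≤ ∑ p ∈ J, ∑ ℓ ∈ L.filter (Inc p ·), b p ℓ := sum_le_sum hAMGM
      _ = #L := sum_sum_filter_eq_card J L Inc b hline
  have hroot := le_rpow_inv_of_pow_le (by omega : d - 1 ≠ 0) (by positivity)
    (pow_pred_le_factorial_mul_pow (by omega) hW₀ hNW hdN)
  rw [Nat.cast_pred (by omega), mul_rpow (by positivity) (by positivity),
    ← rpow_natCast (#L : ℝ) d, ← rpow_mul (by positivity)] at hroot
  rwa [one_div, div_eq_mul_inv (d : ℝ), div_mul_eq_mul_div, le_div_iff₀ (by positivity),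
    mul_comm]
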